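/- arXiv:1607.07837 — 7 statements merged into one kernel-verified Lean document; each statement's English description precedes it below -/
import Mathlib

section
/- Let V ∈ ℝ^{d×k} have orthonormal columns, X ∈ ℝ^{d×s} satisfy ‖X‖₂ ≤ 1, and Q_t ∈ ℝ^{d×k} be a column-orthonormal matrix of the form Q_t = P_t Q R_t for some invertible R_t ∈ ℝ^{k×k}, where VᵀP_tQ is invertible. Then ‖Xᵀ Q_t‖_F ≤ ‖Xᵀ P_t Q (Vᵀ P_t Q)^{-1}‖_F. -/
open Matrix

/-- Frobenius norm of a rectangular real matrix: `√(Tr(AᵀA))`. -/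
noncomputable def frob {m n : ℕ} (A : Matrix (Fin m) (Fin n) ℝ) : ℝ :=
  Real.sqrt (Matrix.trace (Aᵀ * A))

lemma trace_transpose_mul_self_nonneg {m n : ℕ} (M : Matrix (Fin m) (Fin n) ℝ) :
    0 ≤ Matrix.trace (Mᵀ * M) := by
  simp only [Matrix.trace, Matrix.diag, Matrix.mul_apply, Matrix.transpose_apply]
  exact Finset.sum_nonneg fun i _ => Finset.sum_nonneg fun j _ => mul_self_nonneg _

/-- If `V` has orthonormal columns, `‖X‖₂ ≤ 1`, and `Q_t` is a
column-orthonormal matrix of the form `Q_t = P_t Q R_t` with `R_t` invertible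
and `Vᵀ P_t Q` invertible, then
`‖Xᵀ Q_t‖_F ≤ ‖Xᵀ P_t Q (Vᵀ P_t Q)⁻¹‖_F`. -/
theorem frob_Qt_le {d k s : ℕ}
    (V : Matrix (Fin d) (Fin k) ℝ) (hV : Vᵀ * V = 1)
    (X : Matrix (Fin d) (Fin s) ℝ)
    (hX : ∀ v : Fin s → ℝ, ∑ i, (X.mulVec v i) ^ 2 ≤ ∑ j, (v j) ^ 2)
    (P : Matrix (Fin d) (Fin d) ℝ) (Q : Matrix (Fin d) (Fin k) ℝ)
    (Qt : Matrix (Fin d) (Fin k) ℝ) (Rt : Matrix (Fin k) (Fin k) ℝ)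
    (hQt_orth : Qtᵀ * Qt = 1)
    (hRt : IsUnit Rt.det)
    (hQt : Qt = P * Q * Rt)
    (hinv : IsUnit (Vᵀ * (P * Q)).det) :
    frob (Xᵀ * Qt) ≤ frob (Xᵀ * (P * Q) * (Vᵀ * (P * Q))⁻¹) := by
  set A : Matrix (Fin s) (Fin k) ℝ := Xᵀ * (P * Q) * (Vᵀ * (P * Q))⁻¹ with hA
  set B : Matrix (Fin k) (Fin k) ℝ := Vᵀ * Qt with hB
  set C : Matrix (Fin d) (Fin k) ℝ := (1 - Qt * Qtᵀ) * V with hC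
  have key : Xᵀ * Qt = A * B := by
    have h1 : (Vᵀ * (P * Q))⁻¹ * (Vᵀ * (P * Q)) = 1 := Matrix.nonsing_inv_mul _ hinv
    rw [hA, hB, hQt]
    rw [show Vᵀ * (P * Q * Rt) = Vᵀ * (P * Q) * Rt by simp only [Matrix.mul_assoc]]
    rw [← Matrix.mul_assoc (Xᵀ * (P * Q) * (Vᵀ * (P * Q))⁻¹)]
    rw [Matrix.mul_assoc (Xᵀ * (P * Q)), h1, Matrix.mul_one, ← Matrix.mul_assoc Xᵀ]
  have hCC : Cᵀ * C = 1 - B * Bᵀ := by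
    have hQQ : (Qt * Qtᵀ) * (Qt * Qtᵀ) = Qt * Qtᵀ := by
      rw [Matrix.mul_assoc, ← Matrix.mul_assoc Qtᵀ, hQt_orth, Matrix.one_mul]
    simp only [hC, hB, Matrix.transpose_mul, Matrix.transpose_sub, Matrix.transpose_one,
      Matrix.transpose_transpose, Matrix.sub_mul, Matrix.mul_sub, Matrix.one_mul,
      Matrix.mul_one, Matrix.mul_assoc]
    rw [hV, show Qtᵀ * (Qt * (Qtᵀ * V)) = Qtᵀ * V by
      rw [← Matrix.mul_assoc, hQt_orth, Matrix.one_mul]]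
    abel
  have htr : Matrix.trace ((A * B)ᵀ * (A * B)) ≤ Matrix.trace (Aᵀ * A) := by
    have h1 : Matrix.trace ((A * Cᵀ)ᵀ * (A * Cᵀ)) =
        Matrix.trace (Aᵀ * A) - Matrix.trace ((A * B)ᵀ * (A * B)) := by
      have e1 : Matrix.trace ((A * Cᵀ)ᵀ * (A * Cᵀ)) = Matrix.trace ((Aᵀ * A) * (Cᵀ * C)) := by
        rw [Matrix.transpose_mul, Matrix.transpose_transpose]
        rw [Matrix.mul_assoc, ← Matrix.mul_assoc Aᵀ, ← Matrix.mul_assoc Aᵀ]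
        rw [Matrix.trace_mul_comm C, Matrix.mul_assoc]
      have e2 : Matrix.trace ((A * B)ᵀ * (A * B)) = Matrix.trace ((Aᵀ * A) * (B * Bᵀ)) := by
        rw [Matrix.transpose_mul]
        rw [Matrix.mul_assoc, ← Matrix.mul_assoc Aᵀ, ← Matrix.mul_assoc Aᵀ]
        rw [Matrix.trace_mul_comm Bᵀ, Matrix.mul_assoc]
      rw [e1, e2, hCC, Matrix.mul_sub, Matrix.mul_one, Matrix.trace_sub]
    have h2 := trace_transpose_mul_self_nonneg (A * Cᵀ)
    linarith [h1 ▸ h2]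
  rw [frob, frob, key]
  exact Real.sqrt_le_sqrt htr
end

section
/- Let β ∈ (√2/2, √3/2), ε ∈ (0, 2β²-1], a = (β, √(1-β²)), b = (β, -√(1-β²)) ∈ ℝ², and define B = (1/2+ε)aaᵀ + (1/2-ε)bbᵀ. Let λ₁ᵇ ≥ λ₂ᵇ be the eigenvalues of B and λ₁ = β², λ₂ = 1-β². Then λ₁ᵇ > λ₁ > λ₂ > λ₂ᵇ. -/
open Matrix

/-- The matrix `B = (1/2+ε)aaᵀ + (1/2-ε)bbᵀ` with
`a = (β, √(1-β²))`, `b = (β, -√(1-β²))`. -/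
noncomputable def Bmat (β ε : ℝ) : Matrix (Fin 2) (Fin 2) ℝ :=
  (1 / 2 + ε : ℝ) • Matrix.vecMulVec ![β, Real.sqrt (1 - β ^ 2)]
      ![β, Real.sqrt (1 - β ^ 2)]
    + (1 / 2 - ε : ℝ) • Matrix.vecMulVec ![β, -Real.sqrt (1 - β ^ 2)]
      ![β, -Real.sqrt (1 - β ^ 2)]

/-!
The eigenvalues `μ₁ ≥ μ₂` of `B` satisfy `μ₁ + μ₂ = tr B = 1` and
`μ₁ μ₂ = det B = (1 - 4ε²) β² (1 - β²)`, which is strictly smaller than `β² (1 - β²)`.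
Since `t ↦ t (1 - t)` is strictly decreasing on `[1/2, 1]` and both `μ₁` and `β²` lie there,
`μ₁ > β²`, and then `μ₂ = 1 - μ₁ < 1 - β²`.
-/

namespace Matrix.IsHermitian

variable {𝕜 : Type*} [RCLike 𝕜] {A : Matrix (Fin 2) (Fin 2) 𝕜}

theorem eigenvalues_zero_add_eigenvalues_one (hA : A.IsHermitian) :
    (hA.eigenvalues 0 + hA.eigenvalues 1 : 𝕜) = A.trace := by
  simp [hA.trace_eq_sum_eigenvalues, Fin.sum_univ_two]

theorem eigenvalues_zero_mul_eigenvalues_one (hA : A.IsHermitian) :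
    (hA.eigenvalues 0 * hA.eigenvalues 1 : 𝕜) = A.det := by
  simp [hA.det_eq_prod_eigenvalues, Fin.prod_univ_two]

end Matrix.IsHermitian

theorem Matrix.det_fin_two_smul_vecMulVec_add_smul_vecMulVec {R : Type*} [CommRing R]
    (p q : R) (a b : Fin 2 → R) :
    (p • vecMulVec a a + q • vecMulVec b b).det = p * q * (a 0 * b 1 - a 1 * b 0) ^ 2 := by
  simp only [det_fin_two, Matrix.add_apply, Matrix.smul_apply, vecMulVec_apply, smul_eq_mul]
  ring

theorem lt_max_and_min_lt_of_add_eq_one_of_mul_lt {x y t : ℝ} (hsum : x + y = 1) (ht : 1 / 2 ≤ t)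
    (hprod : x * y < t * (1 - t)) : t < max x y ∧ min x y < 1 - t := by
  have hmin : min x y = 1 - max x y := by linarith [min_add_max x y]
  have hmax : max x y * (1 - max x y) < t * (1 - t) := by
    rwa [← hmin, mul_comm, min_mul_max]
  have hhalf : 1 / 2 ≤ max x y := by linarith [min_le_max (a := x) (b := y)]
  have hlt : t < max x y := by nlinarith
  exact ⟨hlt, by linarith⟩

section Bmat

variable {β ε : ℝ}

theorem Bmat_trace (hβ : β ^ 2 ≤ 1) : (Bmat β ε).trace = 1 := by
  have hs : Real.sqrt (1 - β ^ 2) ^ 2 = 1 - β ^ 2 := Real.sq_sqrt (by linarith)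
  rw [Bmat, trace_add, trace_smul, trace_smul, trace_vecMulVec, trace_vecMulVec]
  simp only [dotProduct, Fin.sum_univ_two, cons_val_zero, cons_val_one, smul_eq_mul]
  linear_combination hs

theorem Bmat_det (hβ : β ^ 2 ≤ 1) :
    (Bmat β ε).det = (1 - 4 * ε ^ 2) * (β ^ 2 * (1 - β ^ 2)) := by
  have hs : Real.sqrt (1 - β ^ 2) ^ 2 = 1 - β ^ 2 := Real.sq_sqrt (by linarith)
  rw [Bmat, det_fin_two_smul_vecMulVec_add_smul_vecMulVec]
  simp only [cons_val_zero, cons_val_one]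
  linear_combination (4 * β ^ 2 * (1 / 4 - ε ^ 2)) * hs

end Bmat

theorem Bmat_eigenvalue_separation_general (β ε : ℝ)
    (h1 : Real.sqrt 2 / 2 < β) (h2 : β < Real.sqrt 3 / 2)
    (hε1 : 0 < ε)
    (hB : (Bmat β ε).IsHermitian) :
    β ^ 2 < max (hB.eigenvalues 0) (hB.eigenvalues 1)
    ∧ 1 - β ^ 2 < β ^ 2
    ∧ min (hB.eigenvalues 0) (hB.eigenvalues 1) < 1 - β ^ 2 := by
  have hβ_lower : 1 / 2 < β ^ 2 := by
    have h := pow_lt_pow_left₀ h1 (by positivity) two_ne_zero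
    rw [div_pow, Real.sq_sqrt zero_le_two] at h
    linarith
  have hβ_upper : β ^ 2 < 1 := by
    have h := pow_lt_pow_left₀ h2 (by linarith [Real.sqrt_nonneg 2]) two_ne_zero
    rw [div_pow, Real.sq_sqrt zero_le_three] at h
    linarith
  have hsum : hB.eigenvalues 0 + hB.eigenvalues 1 = 1 := by
    simpa [Bmat_trace hβ_upper.le] using hB.eigenvalues_zero_add_eigenvalues_one
  have hprod : hB.eigenvalues 0 * hB.eigenvalues 1 < β ^ 2 * (1 - β ^ 2) := by
    have hdet := hB.eigenvalues_zero_mul_eigenvalues_one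
    simp only [RCLike.ofReal_real_eq_id, id, Bmat_det hβ_upper.le] at hdet
    have hpos : 0 < β ^ 2 * (1 - β ^ 2) := mul_pos (by linarith) (by linarith)
    rw [hdet]
    linarith [mul_pos (pow_pos hε1 2) hpos]
  obtain ⟨hmax, hmin⟩ := lt_max_and_min_lt_of_add_eq_one_of_mul_lt hsum hβ_lower.le hprod
  exact ⟨hmax, by linarith, hmin⟩

/-- For `β ∈ (√2/2, √3/2)` and `ε ∈ (0, 2β²-1]`, the eigenvalues
`λ₁ᵇ ≥ λ₂ᵇ` of `B = (1/2+ε)aaᵀ + (1/2-ε)bbᵀ` satisfy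
`λ₁ᵇ > λ₁ = β² > 1-β² = λ₂ > λ₂ᵇ`. -/
theorem Bmat_eigenvalue_separation (β ε : ℝ)
    (h1 : Real.sqrt 2 / 2 < β) (h2 : β < Real.sqrt 3 / 2)
    (hε1 : 0 < ε) (hε2 : ε ≤ 2 * β ^ 2 - 1)
    (hB : (Bmat β ε).IsHermitian) :
    β ^ 2 < max (hB.eigenvalues 0) (hB.eigenvalues 1)
    ∧ 1 - β ^ 2 < β ^ 2
    ∧ min (hB.eigenvalues 0) (hB.eigenvalues 1) < 1 - β ^ 2 :=
  Bmat_eigenvalue_separation_general β ε h1 h2 hε1 hB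
end

section
/- Let β ∈ (√2/2, √3/2), ε ∈ (0, 2β²-1], and B be the 2×2 symmetric matrix with B₁₁ = β², B₂₂ = 1-β², off-diagonal entries 2εβ√(1-β²). Let ν₁ᵃ = (1,0)ᵀ and let ν₁ᵇ be a unit top eigenvector of B. Then ⟨ν₁ᵃ, ν₁ᵇ⟩² ≤ 1 - ε²/(16(2β²-1)²). -/
open Matrix

private lemma aux_c2lb (ε c t : ℝ) (hε : 0 < ε) (ht1 : 1 / 2 < t) (ht2 : t < 3 / 4)
    (hc2 : c ^ 2 = 4 * ε ^ 2 * t * (1 - t)) : ε ^ 2 / 2 ≤ c ^ 2 := by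
  nlinarith [mul_nonneg (sq_nonneg ε) (mul_nonneg (by linarith : (0:ℝ) ≤ t - 1/2)
    (by linarith : (0:ℝ) ≤ 3/4 - t))]

private lemma aux_cle (β q ε c : ℝ) (hε : 0 < ε) (hq2 : q ^ 2 = 1 - β ^ 2)
    (hc : 2 * ε * β * q = c) : c ≤ ε := by
  nlinarith [mul_nonneg hε.le (sq_nonneg (β - q))]

private lemma aux_Ale (c A d : ℝ) (hc : 0 < c) (hA : 0 < A) (hd : 0 < d)
    (hkey : c ^ 2 = A * (A + d)) : A ≤ c := by
  nlinarith [mul_pos hA hd]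

private lemma aux_Alb (c A d : ℝ) (hA : 0 < A) (hAd : A ≤ d)
    (hkey : c ^ 2 = A * (A + d)) : c ^ 2 ≤ 2 * d * A := by
  nlinarith [mul_le_mul_of_nonneg_left hAd hA.le]

private lemma aux_fin (ε c d A y : ℝ) (hA : 0 < A) (hc : 0 < c) (hd : 0 < d)
    (hy : 0 ≤ y) (hsq : y * (c ^ 2 + A ^ 2) = A ^ 2) (hAlb : c ^ 2 ≤ 2 * d * A)
    (hclb : ε ^ 2 / 2 ≤ c ^ 2) (hAc : A ≤ c) : ε ^ 2 ≤ 16 * d ^ 2 * y := by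
  have hA2c2 : A ^ 2 ≤ c ^ 2 := by nlinarith
  have h1 : A ^ 2 ≤ 2 * c ^ 2 * y := by nlinarith [mul_le_mul_of_nonneg_left hA2c2 hy]
  have h2 : c ^ 2 * c ^ 2 ≤ 4 * d ^ 2 * A ^ 2 := by
    nlinarith [mul_le_mul hAlb hAlb (sq_nonneg c) (by positivity : (0:ℝ) ≤ 2 * d * A)]
  have h3 : ε ^ 2 * c ^ 2 ≤ 16 * d ^ 2 * y * c ^ 2 := by
    nlinarith [mul_le_mul_of_nonneg_right (by linarith : ε ^ 2 ≤ 2 * c ^ 2) (sq_nonneg c),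
      mul_le_mul_of_nonneg_left h1 (by positivity : (0:ℝ) ≤ 4 * d ^ 2)]
  exact le_of_mul_le_mul_right h3 (by positivity)

set_option maxHeartbeats 800000 in
/-- Let `B` be the 2×2 symmetric matrix with `B₁₁ = β²`, `B₂₂ = 1-β²`,
off-diagonal entries `2εβ√(1-β²)`.  If `ν₁ᵇ = v` is a unit top eigenvector
of `B` (eigenvector whose eigenvalue dominates all other eigenvalues), then
`⟨(1,0), v⟩² ≤ 1 - ε²/(16(2β²-1)²)`. -/
theorem top_eigenvector_correlation_bound (β ε : ℝ)
    (h1 : Real.sqrt 2 / 2 < β) (h2 : β < Real.sqrt 3 / 2)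
    (hε1 : 0 < ε) (hε2 : ε ≤ 2 * β ^ 2 - 1)
    (B : Matrix (Fin 2) (Fin 2) ℝ)
    (hBdef : B = !![β ^ 2, 2 * ε * β * Real.sqrt (1 - β ^ 2);
        2 * ε * β * Real.sqrt (1 - β ^ 2), 1 - β ^ 2])
    (v : Fin 2 → ℝ) (hv : (v 0) ^ 2 + (v 1) ^ 2 = 1)
    (μ : ℝ) (hμ : B.mulVec v = μ • v)
    (htop : ∀ (w : Fin 2 → ℝ) (ν : ℝ), w ≠ 0 → B.mulVec w = ν • w → ν ≤ μ) :
    (v 0) ^ 2 ≤ 1 - ε ^ 2 / (16 * (2 * β ^ 2 - 1) ^ 2) := by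

  have hs2 : (Real.sqrt 2 / 2) ^ 2 = 1 / 2 := by
    rw [div_pow, Real.sq_sqrt (by norm_num : (2:ℝ) ≥ 0)]; norm_num
  have hs3 : (Real.sqrt 3 / 2) ^ 2 = 3 / 4 := by
    rw [div_pow, Real.sq_sqrt (by norm_num : (3:ℝ) ≥ 0)]; norm_num
  have hβ0 : 0 < β := lt_of_le_of_lt (by positivity) h1
  have ht1 : 1 / 2 < β ^ 2 := by
    have := pow_lt_pow_left₀ h1 (by positivity) (by norm_num : 2 ≠ 0)
    rwa [hs2] at this
  have ht2 : β ^ 2 < 3 / 4 := by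
    have := pow_lt_pow_left₀ h2 hβ0.le (by norm_num : 2 ≠ 0)
    rwa [hs3] at this
  clear hs2 hs3 h1 h2
  -- introduce opaque names
  obtain ⟨q, hq_def⟩ : ∃ x, Real.sqrt (1 - β ^ 2) = x := ⟨_, rfl⟩
  rw [hq_def] at hBdef
  have hq2 : q ^ 2 = 1 - β ^ 2 := by rw [← hq_def]; exact Real.sq_sqrt (by linarith)
  have hq0 : 0 < q := by rw [← hq_def]; exact Real.sqrt_pos.mpr (by linarith)
  obtain ⟨c, hc_def⟩ : ∃ x, 2 * ε * β * q = x := ⟨_, rfl⟩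
  rw [hc_def] at hBdef
  have hc0 : 0 < c := by rw [← hc_def]; positivity
  obtain ⟨d, hd_def⟩ : ∃ x, 2 * β ^ 2 - 1 = x := ⟨_, rfl⟩
  rw [hd_def] at hε2 ⊢
  have hd : 0 < d := by rw [← hd_def]; linarith
  have hc2 : c ^ 2 = 4 * ε ^ 2 * β ^ 2 * (1 - β ^ 2) := by
    rw [← hc_def]; linear_combination (4 * ε ^ 2 * β ^ 2) * hq2
  have hc2lb : ε ^ 2 / 2 ≤ c ^ 2 := by
    exact aux_c2lb ε c (β ^ 2) hε1 ht1 ht2 hc2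
  have hcε : c ≤ ε := aux_cle β q ε c hε1 hq2 hc_def
  have hcd : c ≤ d := le_trans hcε hε2
  -- eigen equations
  have e0 := congrFun hμ 0
  have e1 := congrFun hμ 1
  simp only [hBdef] at e0 e1
  simp [Matrix.mulVec, dotProduct, Fin.sum_univ_two] at e0 e1
  -- lower bound on μ via the explicit top eigenvector
  obtain ⟨r, hr_def⟩ : ∃ x, Real.sqrt (d ^ 2 + 4 * c ^ 2) = x := ⟨_, rfl⟩
  have hr2 : r ^ 2 = d ^ 2 + 4 * c ^ 2 := by rw [← hr_def]; exact Real.sq_sqrt (by positivity)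
  have hr0 : 0 ≤ r := by rw [← hr_def]; exact Real.sqrt_nonneg _
  have hrd : d < r := by
    refine lt_of_pow_lt_pow_left₀ 2 hr0 ?_
    rw [hr2]; linarith [pow_pos hc0 2]
  have hβd : β ^ 2 = (1 + d) / 2 := by rw [← hd_def]; ring
  have hμge : (1 + r) / 2 ≤ μ := by
    refine htop ![c, (r - d) / 2] ((1 + r) / 2) ?_ ?_
    · intro h
      have := congrFun h 0
      simp at this
      exact hc0.ne' this
    · funext i
      fin_cases i <;>
        simp [hBdef, Matrix.mulVec, dotProduct, Fin.sum_univ_two]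
      · linear_combination c * hβd
      · linear_combination (-(r - d) / 2) * hβd - (1/4) * hr2
  have hμβ : β ^ 2 < μ := by rw [hβd]; linarith
  clear htop hμ hBdef
  clear B
  obtain ⟨A, hA_def⟩ : ∃ x, μ - β ^ 2 = x := ⟨_, rfl⟩
  have hA : 0 < A := by rw [← hA_def]; linarith
  -- relations between v 0 and v 1
  have r0 : c * v 1 = A * v 0 := by linear_combination e0 + v 0 * hA_def
  have r1 : c * v 0 = (A + d) * v 1 := by
    linear_combination e1 + v 1 * hA_def + v 1 * hd_def
  have hv0 : v 0 ≠ 0 := by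
    intro h
    have hv1 : v 1 = 0 := by
      have : c * v 1 = 0 := by rw [r0, h]; ring
      exact (mul_eq_zero.mp this).resolve_left hc0.ne'
    rw [h, hv1] at hv; norm_num at hv
  have hv1 : v 1 ≠ 0 := by
    intro h
    have : A * v 0 = 0 := by rw [← r0, h]; ring
    exact hv0 ((mul_eq_zero.mp this).resolve_left hA.ne')
  have hkey : c ^ 2 = A * (A + d) := by
    have hm : (c * v 1) * (c * v 0) = (A * v 0) * ((A + d) * v 1) := by rw [r0, r1]
    have hvv : v 0 * v 1 ≠ 0 := mul_ne_zero hv0 hv1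
    have : c ^ 2 * (v 0 * v 1) = (A * (A + d)) * (v 0 * v 1) := by linear_combination hm
    exact mul_right_cancel₀ hvv this
  have hAc : A ≤ c := aux_Ale c A d hc0 hA hd hkey
  have hAd : A ≤ d := le_trans hAc hcd
  have hAlb : c ^ 2 ≤ 2 * d * A := aux_Alb c A d hA hAd hkey
  have hsq : v 1 ^ 2 * (c ^ 2 + A ^ 2) = A ^ 2 := by
    have h' : c ^ 2 * v 1 ^ 2 = A ^ 2 * v 0 ^ 2 := by
      linear_combination (c * v 1 + A * v 0) * r0
    linear_combination h' + A ^ 2 * hv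
  have hfin : ε ^ 2 ≤ 16 * d ^ 2 * v 1 ^ 2 :=
    aux_fin ε c d A (v 1 ^ 2) hA hc0 hd (sq_nonneg _) hsq hAlb hc2lb hAc
  have hdiv : ε ^ 2 / (16 * d ^ 2) ≤ v 1 ^ 2 := by
    rw [div_le_iff₀ (by positivity)]; linarith
  linarith [hv, hdiv]
end

section
/- Let λ₁ ≥ λ₂ ≥ ⋯ ≥ λ_d ≥ 0 be nonnegative reals with ∑ᵢ λᵢ ≤ 1, let k ∈ [d], and suppose λ_{k+1}, …, λ_{k+m} > λ_k - ρ ≥ λ_{k+m+1}, …. Partition the indices {k+1,…,k+m} into log d groups S₁,…,S_{log d} by which subinterval of [λ_k - ρ, λ_k) (divided into log d equal pieces) λ_j falls into; set Λᵢ = ∑_{j∈Sᵢ} λ_j, Λ₀ = λ₁+⋯+λ_k, and kᵢ = k + ∑_{j<i}|S_j|. Then there exists an index i with Λᵢ ≤ 100·Λ_{i-1}, and for this i, setting k' = kᵢ, we have (k/k')(Λ₀ + ∑_{j=1}^{i} Λ_j) ≤ 100·Λ₀. -/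
open scoped Classical

/-- `S_i`: the indices `j ∈ {k+1,…,k+m}` whose eigenvalue `λ_j` falls into the
`i`-th subinterval (in descending order) of `[λ_k - ρ, λ_k)` divided into
`log d` equal pieces. -/
noncomputable def groupSet (d k m : ℕ) (ρ : ℝ) (lam : ℕ → ℝ) (i : ℕ) : Finset ℕ :=
  (Finset.Icc (k + 1) (k + m)).filter
    (fun j => lam k - (i : ℝ) * (ρ / (Nat.log 2 d)) ≤ lam j ∧
      lam j < lam k - ((i : ℝ) - 1) * (ρ / (Nat.log 2 d)))

/-- `Λ_i = ∑_{j ∈ S_i} λ_j` for `i ≥ 1`, and `Λ₀ = λ₁ + ⋯ + λ_k`. -/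
noncomputable def groupLam (d k m : ℕ) (ρ : ℝ) (lam : ℕ → ℝ) (i : ℕ) : ℝ :=
  if i = 0 then ∑ j ∈ Finset.Icc 1 k, lam j
  else ∑ j ∈ groupSet d k m ρ lam i, lam j

lemma groupLam_nonneg (d k m : ℕ) (ρ : ℝ) (lam : ℕ → ℝ)
    (hnonneg : ∀ i, 0 ≤ lam i) (i : ℕ) : 0 ≤ groupLam d k m ρ lam i := by
  unfold groupLam
  split <;> exact Finset.sum_nonneg fun j _ => hnonneg j

lemma groupLam_le_card_mul (d k m : ℕ) (ρ : ℝ) (lam : ℕ → ℝ)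
    (hk : 1 ≤ k) (hkm : k + m ≤ d)
    (hmono : ∀ i j, 1 ≤ i → i ≤ j → j ≤ d → lam j ≤ lam i)
    (i : ℕ) (hi : 1 ≤ i) :
    groupLam d k m ρ lam i ≤ ((groupSet d k m ρ lam i).card : ℝ) * lam k := by
  unfold groupLam
  rw [if_neg (by omega)]
  have h : ∀ j ∈ groupSet d k m ρ lam i, lam j ≤ lam k := by
    intro j hj
    simp only [groupSet, Finset.mem_filter, Finset.mem_Icc] at hj
    exact hmono k j hk (by omega) (by omega)
  calc ∑ j ∈ groupSet d k m ρ lam i, lam j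
      ≤ ∑ _j ∈ groupSet d k m ρ lam i, lam k := Finset.sum_le_sum h
    _ = ((groupSet d k m ρ lam i).card : ℝ) * lam k := by
        rw [Finset.sum_const, nsmul_eq_mul]

/-- There exists an index `i` with `Λ_i ≤ 100·Λ_{i-1}`, and for this `i`,
setting `k' = k_i = k + ∑_{j<i}|S_j|`, we have
`(k/k')(Λ₀ + ∑_{j=1}^{i} Λ_j) ≤ 100·Λ₀`. -/
theorem exists_good_group (d k m : ℕ) (ρ : ℝ) (lam : ℕ → ℝ)
    (hd : 2 ≤ d) (hk : 1 ≤ k) (hkm : k + m ≤ d)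
    (hmono : ∀ i j, 1 ≤ i → i ≤ j → j ≤ d → lam j ≤ lam i)
    (hnonneg : ∀ i, 0 ≤ lam i)
    (hsum : ∑ i ∈ Finset.Icc 1 d, lam i ≤ 1)
    (hρ : 0 < ρ)
    (hin : ∀ j ∈ Finset.Icc (k + 1) (k + m), lam k - ρ < lam j)
    (hout : ∀ j ∈ Finset.Icc (k + m + 1) d, lam j ≤ lam k - ρ) :
    ∃ i, 1 ≤ i ∧ i ≤ Nat.log 2 d ∧
      groupLam d k m ρ lam i ≤ 100 * groupLam d k m ρ lam (i - 1) ∧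
      (k : ℝ) /
          ((k : ℝ) + ∑ j ∈ Finset.Icc 1 (i - 1), ((groupSet d k m ρ lam j).card : ℝ)) *
          (groupLam d k m ρ lam 0 + ∑ j ∈ Finset.Icc 1 i, groupLam d k m ρ lam j)
        ≤ 100 * groupLam d k m ρ lam 0 := by
  set L := Nat.log 2 d with hLdef
  have hL : 1 ≤ L := Nat.log_pos (by norm_num) hd
  have hΛnn : ∀ i, 0 ≤ groupLam d k m ρ lam i := groupLam_nonneg d k m ρ lam hnonneg
  have hB : ∀ i, 1 ≤ i →
      groupLam d k m ρ lam i ≤ ((groupSet d k m ρ lam i).card : ℝ) * lam k :=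
    groupLam_le_card_mul d k m ρ lam hk hkm hmono
  -- Λ₀ ≥ k·λ_k
  have hC : (k : ℝ) * lam k ≤ groupLam d k m ρ lam 0 := by
    unfold groupLam
    rw [if_pos rfl]
    calc (k : ℝ) * lam k = ∑ _j ∈ Finset.Icc 1 k, lam k := by
          rw [Finset.sum_const, nsmul_eq_mul, Nat.card_Icc]
          norm_num
      _ ≤ ∑ j ∈ Finset.Icc 1 k, lam j := by
          refine Finset.sum_le_sum fun j hj => ?_
          simp only [Finset.mem_Icc] at hj
          exact hmono j k hj.1 hj.2 (by omega)
  have hlk : lam k ≤ groupLam d k m ρ lam 0 := by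
    have := hnonneg k
    nlinarith [hC, (by exact_mod_cast hk : (1:ℝ) ≤ (k:ℝ))]
  have hcardS : ∀ i, ((groupSet d k m ρ lam i).card : ℝ) ≤ (d : ℝ) := by
    intro i
    have h1 : (groupSet d k m ρ lam i).card ≤ (Finset.Icc (k+1) (k+m)).card :=
      Finset.card_le_card (Finset.filter_subset _ _)
    have h2 : (Finset.Icc (k+1) (k+m)).card = m := by
      rw [Nat.card_Icc]; omega
    have : (groupSet d k m ρ lam i).card ≤ d := by omega
    exact_mod_cast this
  -- existence of a good index
  have key : ∃ i, 1 ≤ i ∧ i ≤ L ∧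
      groupLam d k m ρ lam i ≤ 99 * groupLam d k m ρ lam (i - 1) := by
    by_contra hcon
    push_neg at hcon
    have hgrow : ∀ i, i ≤ L →
        (99 : ℝ) ^ i * groupLam d k m ρ lam 0 ≤ groupLam d k m ρ lam i := by
      intro i
      induction i with
      | zero => intro _; simp
      | succ n ih =>
        intro hn
        have h1 := hcon (n + 1) (by omega) hn
        have h2 := ih (by omega)
        have : (n + 1) - 1 = n := by omega
        rw [this] at h1
        calc (99 : ℝ) ^ (n+1) * groupLam d k m ρ lam 0
            = 99 * ((99:ℝ)^n * groupLam d k m ρ lam 0) := by ring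
          _ ≤ 99 * groupLam d k m ρ lam n := by linarith
          _ ≤ groupLam d k m ρ lam (n+1) := le_of_lt h1
    have hpow : (d : ℝ) < (99 : ℝ) ^ L := by
      have h1 : d < 2 ^ (L + 1) := Nat.lt_pow_succ_log_self (by norm_num) d
      have h2 : 2 ^ (L + 1) ≤ 99 ^ L := by
        calc 2 ^ (L + 1) ≤ 2 ^ (2 * L) := Nat.pow_le_pow_right (by norm_num) (by omega)
          _ = 4 ^ L := by rw [pow_mul]; norm_num
          _ ≤ 99 ^ L := Nat.pow_le_pow_left (by norm_num) L
      have : d < 99 ^ L := by omega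
      exact_mod_cast this
    have hZL := hgrow L le_rfl
    have hBL := hB L hL
    have hcL := hcardS L
    -- Λ_L ≤ d·λ_k ≤ d·Λ₀, and 99^L·Λ₀ ≤ Λ_L, with d < 99^L ⇒ Λ₀ ≤ 0
    have hΛ0 : groupLam d k m ρ lam 0 ≤ 0 := by
      by_contra hpos
      push_neg at hpos
      have hdlk : groupLam d k m ρ lam L ≤ (d : ℝ) * lam k := by
        calc groupLam d k m ρ lam L ≤ ((groupSet d k m ρ lam L).card : ℝ) * lam k := hBL
          _ ≤ (d : ℝ) * lam k := by nlinarith [hnonneg k]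
      nlinarith [hnonneg k]
    have hΛ0' : groupLam d k m ρ lam 0 = 0 := le_antisymm hΛ0 (hΛnn 0)
    have hlk0 : lam k = 0 := le_antisymm (hΛ0' ▸ hlk) (hnonneg k)
    have h1 := hcon 1 le_rfl hL
    have h2 := hB 1 le_rfl
    rw [hlk0, mul_zero] at h2
    simp only [Nat.sub_self, hΛ0', mul_zero] at h1
    linarith
  obtain ⟨i, hi1, hiL, hi99⟩ := key
  refine ⟨i, hi1, hiL, by linarith [hΛnn (i - 1)], ?_⟩
  obtain ⟨n, rfl⟩ : ∃ n, i = n + 1 := ⟨i - 1, by omega⟩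
  simp only [Nat.add_sub_cancel] at hi99 ⊢
  set Λ : ℕ → ℝ := groupLam d k m ρ lam with hΛdef
  set c : ℝ := ∑ j ∈ Finset.Icc 1 n, ((groupSet d k m ρ lam j).card : ℝ) with hc
  have hc0 : (0:ℝ) ≤ c :=
    Finset.sum_nonneg fun j _ => by positivity
  have hkR : (1:ℝ) ≤ (k:ℝ) := by exact_mod_cast hk
  have hk' : (0:ℝ) < (k:ℝ) + c := by linarith
  rw [div_mul_eq_mul_div, div_le_iff₀ hk']
  -- split the sum
  have hsplit : ∑ j ∈ Finset.Icc 1 (n + 1), Λ j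
      = (∑ j ∈ Finset.Icc 1 n, Λ j) + Λ (n + 1) :=
    Finset.sum_Icc_succ_top (by omega) Λ
  -- ∑_{j=1}^n Λ_j ≤ c·λ_k
  have hS : ∑ j ∈ Finset.Icc 1 n, Λ j ≤ c * lam k := by
    rw [hc, Finset.sum_mul]
    refine Finset.sum_le_sum fun j hj => ?_
    simp only [Finset.mem_Icc] at hj
    exact hB j hj.1
  -- k·T ≤ (k + c)·Λ₀ where T = Λ₀ + ∑_{j≤n} Λ_j
  have hkT : (k:ℝ) * (Λ 0 + ∑ j ∈ Finset.Icc 1 n, Λ j) ≤ ((k:ℝ) + c) * Λ 0 := by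
    have e1 : (k:ℝ) * (∑ j ∈ Finset.Icc 1 n, Λ j) ≤ (k:ℝ) * (c * lam k) :=
      mul_le_mul_of_nonneg_left hS (by linarith)
    have e2 : c * ((k:ℝ) * lam k) ≤ c * Λ 0 :=
      mul_le_mul_of_nonneg_left hC hc0
    nlinarith
  -- Λ_n ≤ T
  have hprev : Λ n ≤ Λ 0 + ∑ j ∈ Finset.Icc 1 n, Λ j := by
    rcases Nat.eq_zero_or_pos n with hn0 | hn0
    · subst hn0
      have : ∑ j ∈ Finset.Icc 1 0, Λ j = 0 := by simp
      linarith
    · have : Λ n ≤ ∑ j ∈ Finset.Icc 1 n, Λ j :=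
        Finset.single_le_sum (fun j _ => hΛnn j) (by simp [Finset.mem_Icc]; omega)
      linarith [hΛnn 0]
  rw [hsplit]
  have e3 : (k:ℝ) * Λ (n+1) ≤ (k:ℝ) * (99 * Λ n) :=
    mul_le_mul_of_nonneg_left hi99 (by linarith)
  have e4 : (99 * (k:ℝ)) * Λ n ≤ (99 * (k:ℝ)) * (Λ 0 + ∑ j ∈ Finset.Icc 1 n, Λ j) :=
    mul_le_mul_of_nonneg_left hprev (by linarith)
  nlinarith [hkT]
end

section
/- Let Q ∈ ℝ^{k×k} have i.i.d. standard Gaussian entries and let σ₁ ≤ ⋯ ≤ σ_k be its singular values. Assuming the bound Pr[σ_j ≤ αj/√k] ≤ ((2e)^{1/2} α)^{j²} for all j ∈ [k] and α ≥ 0, then for every p ∈ (0,1): Pr[ Tr((QᵀQ)^{-1}) ≥ π²ek/(3p) ] ≤ √p/(1-p). -/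
open MeasureTheory ProbabilityTheory Matrix

/-! Since `Tr((QᵀQ)⁻¹) = ∑ⱼ σⱼ⁻²` and `∑ⱼ 1/j² ≤ π²/6`, the trace can reach `π²ek/(3p)` only if
`σⱼ ≤ αj/√k` for some `j`, where `α = √(p/(2e))`. By the assumed tail bound this has probability
at most `(√p)^{j²}`, and a union bound gives `∑ⱼ (√p)^{j²} ≤ √p ∑ⱼ pʲ = √p/(1-p)`. -/

namespace Matrix.IsHermitian

variable {n 𝕜 : Type*} [RCLike 𝕜] [Fintype n] [DecidableEq n] {A : Matrix n n 𝕜}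

lemma trace_cfc (hA : A.IsHermitian) (f : ℝ → ℝ) :
    (cfc f A).trace = ∑ i, (f (hA.eigenvalues i) : 𝕜) := by
  rw [hA.cfc_eq, IsHermitian.cfc, Unitary.conjStarAlgAut_apply, trace_mul_cycle,
    Unitary.coe_star_mul_self, one_mul, trace_diagonal]
  rfl

lemma trace_inv_eq_sum_inv_eigenvalues (hA : A.IsHermitian) (h : ∀ i, hA.eigenvalues i ≠ 0) :
    A⁻¹.trace = ∑ i, ((hA.eigenvalues i)⁻¹ : 𝕜) := by
  have hunit : IsUnit A := by
    rw [← spectrum.zero_notMem_iff ℝ, hA.spectrum_real_eq_range_eigenvalues]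
    rintro ⟨i, hi⟩
    exact h i hi
  obtain ⟨u, rfl⟩ := hunit
  rw [nonsing_inv_eq_ringInverse, Ring.inverse_unit, ← cfc_inv_id (R := ℝ) u hA.isSelfAdjoint,
    hA.trace_cfc]
  simp

end Matrix.IsHermitian

lemma Matrix.IsHermitian.trace_inv_eq_sum_inv_sq {n : Type*} [Fintype n] [DecidableEq n]
    {A : Matrix n n ℝ} (hA : A.IsHermitian) {s : n → ℝ} (e : n ≃ n)
    (he : ∀ j, s j ^ 2 = hA.eigenvalues (e j)) (hs : ∀ j, s j ≠ 0) :
    A⁻¹.trace = ∑ j, (s j ^ 2)⁻¹ := by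
  have h i : hA.eigenvalues i ≠ 0 := by
    obtain ⟨j, rfl⟩ := e.surjective i
    exact he j ▸ pow_ne_zero 2 (hs j)
  rw [hA.trace_inv_eq_sum_inv_eigenvalues h, ← e.sum_comp]
  simp [he]

lemma sum_one_div_succ_sq_le_pi_sq_div_six (n : ℕ) :
    ∑ j ∈ Finset.range n, 1 / ((j : ℝ) + 1) ^ 2 ≤ Real.pi ^ 2 / 6 := by
  rw [← hasSum_zeta_two.tsum_eq]
  calc ∑ j ∈ Finset.range n, 1 / ((j : ℝ) + 1) ^ 2
      = ∑ j ∈ Finset.range (n + 1), 1 / (j : ℝ) ^ 2 := by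
        simp [Finset.sum_range_succ']
    _ ≤ _ := hasSum_zeta_two.summable.sum_le_tsum _ fun _ _ => by positivity

lemma sum_sqrt_pow_succ_sq_le (n : ℕ) {p : ℝ} (hp0 : 0 ≤ p) (hp1 : p < 1) :
    ∑ j ∈ Finset.range n, √p ^ (j + 1) ^ 2 ≤ √p / (1 - p) := by
  have hterm (j : ℕ) : √p ^ (j + 1) ^ 2 ≤ √p * p ^ j := by
    calc √p ^ (j + 1) ^ 2 ≤ √p ^ (2 * j + 1) :=
          pow_le_pow_of_le_one (Real.sqrt_nonneg p) (Real.sqrt_le_one.mpr hp1.le) (by nlinarith)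
      _ = √p * p ^ j := by rw [pow_succ', pow_mul, Real.sq_sqrt hp0]
  calc ∑ j ∈ Finset.range n, √p ^ (j + 1) ^ 2 ≤ ∑ j ∈ Finset.range n, √p * p ^ j :=
        Finset.sum_le_sum fun j _ => hterm j
    _ = √p * ∑ j ∈ Finset.range n, p ^ j := (Finset.mul_sum ..).symm
    _ ≤ √p * (1 - p)⁻¹ := by
        gcongr
        rw [← tsum_geometric_of_lt_one hp0 hp1]
        exact (summable_geometric_of_lt_one hp0 hp1).sum_le_tsum _ fun _ _ => by positivity
    _ = √p / (1 - p) := (div_eq_mul_inv _ _).symm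

lemma sum_inv_sq_lt_of_mul_succ_lt {n : ℕ} (hn : 0 < n) {c : ℝ} (hc : 0 < c) {s : Fin n → ℝ}
    (hs : ∀ j : Fin n, c * ((j : ℕ) + 1) < s j) :
    ∑ j, (s j ^ 2)⁻¹ < Real.pi ^ 2 / (6 * c ^ 2) := by
  have hterm (j : Fin n) : (s j ^ 2)⁻¹ < (c ^ 2)⁻¹ * (1 / ((j : ℕ) + 1) ^ 2) := by
    rw [one_div, ← mul_inv, ← mul_pow]
    exact inv_strictAnti₀ (by positivity) (pow_lt_pow_left₀ (hs j) (by positivity) two_ne_zero)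
  calc ∑ j, (s j ^ 2)⁻¹ < ∑ j : Fin n, (c ^ 2)⁻¹ * (1 / ((j : ℕ) + 1) ^ 2) :=
        Finset.sum_lt_sum_of_nonempty ⟨⟨0, hn⟩, Finset.mem_univ _⟩ fun j _ => hterm j
    _ = (c ^ 2)⁻¹ * ∑ j ∈ Finset.range n, 1 / ((j : ℝ) + 1) ^ 2 := by
        rw [← Finset.mul_sum, Fin.sum_univ_eq_sum_range (fun j => 1 / ((j : ℝ) + 1) ^ 2)]
    _ ≤ (c ^ 2)⁻¹ * (Real.pi ^ 2 / 6) := by gcongr; exact sum_one_div_succ_sq_le_pi_sq_div_six n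
    _ = Real.pi ^ 2 / (6 * c ^ 2) := by field_simp

theorem trace_inv_gram_tail_general {k : ℕ} (hk : 1 ≤ k)
    (σ : ((Fin k × Fin k) → ℝ) → Fin k → ℝ)
    (hσ_eig : ∀ ω : (Fin k × Fin k) → ℝ, ∃ e : Fin k ≃ Fin k, ∀ j,
      (σ ω j) ^ 2 =
        (show Matrix.IsHermitian ((Matrix.of fun i j' => ω (i, j') : Matrix (Fin k) (Fin k) ℝ)ᵀ *
          (Matrix.of fun i j' => ω (i, j') : Matrix (Fin k) (Fin k) ℝ)) from
          Matrix.isHermitian_conjTranspose_mul_self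
          (Matrix.of fun i j' => ω (i, j') : Matrix (Fin k) (Fin k) ℝ)).eigenvalues (e j))
    (hbound : ∀ (j : Fin k) (α : ℝ), 0 ≤ α →
      (Measure.pi fun _ : Fin k × Fin k => gaussianReal 0 1)
          {ω | σ ω j ≤ α * ((j : ℕ) + 1) / Real.sqrt k}
        ≤ ENNReal.ofReal ((Real.sqrt (2 * Real.exp 1) * α) ^ (((j : ℕ) + 1) ^ 2)))
    (p : ℝ) (hp0 : 0 < p) (hp1 : p < 1) :
    (Measure.pi fun _ : Fin k × Fin k => gaussianReal 0 1)
        {ω | Real.pi ^ 2 * Real.exp 1 * k / (3 * p) ≤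
          Matrix.trace
            (((Matrix.of fun i j' => ω (i, j') : Matrix (Fin k) (Fin k) ℝ)ᵀ *
              (Matrix.of fun i j' => ω (i, j')))⁻¹)}
      ≤ ENNReal.ofReal (Real.sqrt p / (1 - p)) := by
  set α := √(p / (2 * Real.exp 1))
  have hc : 0 < α / √k := by positivity
  have hα : √(2 * Real.exp 1) * α = √p := by
    rw [← Real.sqrt_mul (by positivity)]
    field_simp
  have hconst : Real.pi ^ 2 / (6 * (α / √k) ^ 2) = Real.pi ^ 2 * Real.exp 1 * k / (3 * p) := by
    rw [div_pow, Real.sq_sqrt (by positivity), Real.sq_sqrt (by positivity)]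
    field_simp
    ring
  have hsub : {ω : (Fin k × Fin k) → ℝ | Real.pi ^ 2 * Real.exp 1 * k / (3 * p) ≤
      Matrix.trace (((Matrix.of fun i j' => ω (i, j') : Matrix (Fin k) (Fin k) ℝ)ᵀ *
        (Matrix.of fun i j' => ω (i, j')))⁻¹)} ⊆
      ⋃ j : Fin k, {ω | σ ω j ≤ α * ((j : ℕ) + 1) / √k} := by
    intro ω hω
    by_contra hcon
    simp only [Set.mem_iUnion, Set.mem_ofPred_eq, not_exists, not_le, mul_div_right_comm] at hcon
    rw [Set.mem_ofPred_eq] at hω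
    obtain ⟨e, he⟩ := hσ_eig ω
    have hpos j : σ ω j ≠ 0 := ((hcon j).trans_le' (by positivity)).ne'
    rw [IsHermitian.trace_inv_eq_sum_inv_sq _ e he hpos, ← hconst] at hω
    exact hω.not_gt (sum_inv_sq_lt_of_mul_succ_lt hk hc hcon)
  calc _ ≤ _ := measure_mono hsub
    _ ≤ ∑ j : Fin k, _ := measure_iUnion_fintype_le _ _
    _ ≤ ∑ j : Fin k, ENNReal.ofReal (√p ^ ((j : ℕ) + 1) ^ 2) :=
        Finset.sum_le_sum fun j _ => hα ▸ hbound j α (by positivity)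
    _ = ENNReal.ofReal (∑ j ∈ Finset.range k, √p ^ (j + 1) ^ 2) := by
        rw [ENNReal.ofReal_sum_of_nonneg fun _ _ => by positivity]
        exact Fin.sum_univ_eq_sum_range (fun j => ENNReal.ofReal (√p ^ (j + 1) ^ 2)) k
    _ ≤ ENNReal.ofReal (√p / (1 - p)) :=
        ENNReal.ofReal_le_ofReal (sum_sqrt_pow_succ_sq_le k hp0.le hp1)

/-- Let `Q ∈ ℝ^{k×k}` have i.i.d. standard Gaussian entries with singular
values `σ₁ ≤ ⋯ ≤ σ_k` (here `σ ω` enumerates the singular values of the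
sample `ω` in increasing order, i.e. the square roots of the eigenvalues of
`QᵀQ` up to a permutation).  Assuming the bound
`Pr[σ_j ≤ αj/√k] ≤ ((2e)^{1/2} α)^{j²}` for all `j` and `α ≥ 0`, then for
every `p ∈ (0,1)`:
`Pr[Tr((QᵀQ)⁻¹) ≥ π²ek/(3p)] ≤ √p/(1-p)`. -/
theorem trace_inv_gram_tail {k : ℕ} (hk : 1 ≤ k)
    (σ : ((Fin k × Fin k) → ℝ) → Fin k → ℝ)
    (hσ_nonneg : ∀ ω j, 0 ≤ σ ω j)
    (hσ_mono : ∀ ω, Monotone (σ ω))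
    (hσ_eig : ∀ ω : (Fin k × Fin k) → ℝ, ∃ e : Fin k ≃ Fin k, ∀ j,
      (σ ω j) ^ 2 =
        (show Matrix.IsHermitian ((Matrix.of fun i j' => ω (i, j') : Matrix (Fin k) (Fin k) ℝ)ᵀ *
          (Matrix.of fun i j' => ω (i, j') : Matrix (Fin k) (Fin k) ℝ)) from
          Matrix.isHermitian_conjTranspose_mul_self
          (Matrix.of fun i j' => ω (i, j') : Matrix (Fin k) (Fin k) ℝ)).eigenvalues (e j))
    (hbound : ∀ (j : Fin k) (α : ℝ), 0 ≤ α →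
      (Measure.pi fun _ : Fin k × Fin k => gaussianReal 0 1)
          {ω | σ ω j ≤ α * ((j : ℕ) + 1) / Real.sqrt k}
        ≤ ENNReal.ofReal ((Real.sqrt (2 * Real.exp 1) * α) ^ (((j : ℕ) + 1) ^ 2)))
    (p : ℝ) (hp0 : 0 < p) (hp1 : p < 1) :
    (Measure.pi fun _ : Fin k × Fin k => gaussianReal 0 1)
        {ω | Real.pi ^ 2 * Real.exp 1 * k / (3 * p) ≤
          Matrix.trace
            (((Matrix.of fun i j' => ω (i, j') : Matrix (Fin k) (Fin k) ℝ)ᵀ *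
              (Matrix.of fun i j' => ω (i, j')))⁻¹)}
      ≤ ENNReal.ofReal (Real.sqrt p / (1 - p)) :=
  trace_inv_gram_tail_general hk σ hσ_eig hbound p hp0 hp1
end

section
/- In the setting of the multi-dimensional martingale lemma with D = 1, δ = 0: suppose additionally q ∈ (0,1), min_s 1/(6κτ_{s-1}) ≥ 4 ln(4t/q), and ∑_{s=0}^{t-1} τ_s² ≤ (1/100)·(ln(4t/q))^{-1}, and β_s ≥ 0. Then Pr[ z_t ≥ 2·max{1, z₀} ] ≤ q. -/
/-!
Put `wₛ = zₛ + 1 ≥ 1` and `dₛ = zₛ₊₁ - zₛ`. The increment bound gives `|dₛ| ≤ cₛ wₛ` with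
`cₛ = 3κτₛ/2` and `p cₛ ≤ 1`, so the second-order bound `(1 + x)ᵖ ≤ 1 + p x + p² x²` (valid for
`p |x| ≤ 1`) gives `wₛ₊₁ᵖ ≤ wₛᵖ + p wₛᵖ⁻¹ dₛ + p² wₛᵖ⁻² dₛ²`. Conditioning on `ℱ s` and using the
drift and variance bounds `E[dₛ | ℱ s] ≤ τₛ² wₛ`, `E[dₛ² | ℱ s] ≤ τₛ² wₛ²` yields
`E wₛ₊₁ᵖ ≤ (1 + (p + p²) τₛ²) E wₛᵖ`, hence `E w_tᵖ ≤ (z₀ + 1)ᵖ exp((p + p²) ∑ τₛ²)`; all these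
moments are finite because `z` is deterministically bounded up to time `t`.
Markov's inequality at level `(2 max{1, z₀} + 1)ᵖ` with `p = ⌊4 ln(4t/q)⌋` finishes the proof:
`(z₀ + 1) / (2 max{1, z₀} + 1) ≤ 2/3`, and `(2/3)ᵖ` beats the exponential factor.
-/

open MeasureTheory Real

theorem one_add_pow_le_of_mul_abs_le_one {x : ℝ} :
    ∀ {n : ℕ}, n * |x| ≤ 1 → (1 + x) ^ n ≤ 1 + n * x + n ^ 2 * x ^ 2
  | 0, _ => by simp
  | n + 1, h => by
    push_cast at h
    have hn : (0 : ℝ) ≤ n := n.cast_nonneg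
    have hnx : n * |x| ≤ 1 - |x| := by linarith
    have hx : 0 ≤ 1 + x := by linarith [neg_abs_le x, abs_nonneg x, mul_nonneg hn (abs_nonneg x)]
    have hcubic : (n : ℝ) ^ 2 * x ≤ n + 1 := by
      nlinarith [le_abs_self x, mul_le_mul_of_nonneg_left hnx hn, abs_nonneg x]
    calc (1 + x) ^ (n + 1) = (1 + x) ^ n * (1 + x) := pow_succ _ _
      _ ≤ (1 + n * x + n ^ 2 * x ^ 2) * (1 + x) :=
        mul_le_mul_of_nonneg_right
          (one_add_pow_le_of_mul_abs_le_one (by linarith [abs_nonneg x])) hx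
      _ ≤ 1 + ↑(n + 1) * x + ↑(n + 1) ^ 2 * x ^ 2 := by
        push_cast; nlinarith [mul_nonneg (sq_nonneg x) (sub_nonneg.2 hcubic)]

theorem add_one_pow_le_of_abs_sub_le {x y c : ℝ} {n : ℕ} (hx : 0 ≤ x)
    (hxy : |y - x| ≤ c * (x + 1)) (hnc : n * c ≤ 1) :
    (y + 1) ^ n ≤ (x + 1) ^ n + n * ((x + 1) ^ n / (x + 1) ^ 1 * (y - x))
      + n ^ 2 * ((x + 1) ^ n / (x + 1) ^ 2 * (y - x) ^ 2) := by
  have hw : 0 < x + 1 := by linarith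
  have hr : n * |(y - x) / (x + 1)| ≤ 1 := by
    rw [abs_div, abs_of_pos hw, ← mul_div_assoc, div_le_one hw]
    calc n * |y - x| ≤ n * (c * (x + 1)) := by gcongr
      _ = n * c * (x + 1) := by ring
      _ ≤ x + 1 := mul_le_of_le_one_left hw.le hnc
  calc (y + 1) ^ n = (x + 1) ^ n * (1 + (y - x) / (x + 1)) ^ n := by
        rw [← mul_pow]; congr 1; field_simp; ring
    _ ≤ (x + 1) ^ n * (1 + n * ((y - x) / (x + 1)) + n ^ 2 * ((y - x) / (x + 1)) ^ 2) :=
      mul_le_mul_of_nonneg_left (one_add_pow_le_of_mul_abs_le_one hr) (by positivity)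
    _ = _ := by rw [div_pow]; ring

theorem mul_add_sqrt_add_sq_le {a z : ℝ} (hz : 0 ≤ z) (ha0 : 0 ≤ a) (ha1 : a ≤ 1) :
    a * (z + √z) + a ^ 2 ≤ 3 / 2 * a * (z + 1) := by
  nlinarith [mul_nonneg ha0 (sq_nonneg (√z - 1)), sq_sqrt hz, mul_nonneg ha0 (sub_nonneg.2 ha1)]

theorem sq_mul_add_add_sq_mul_pow_four_le {κ τ z : ℝ} (hz : 0 ≤ z) (hκτ : (κ * τ) ^ 2 ≤ 1) :
    τ ^ 2 * (z ^ 2 + z) + κ ^ 2 * τ ^ 4 ≤ τ ^ 2 * (z + 1) ^ 2 := by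
  nlinarith [mul_nonneg (sq_nonneg τ) (sub_nonneg.2 hκτ), mul_nonneg (sq_nonneg τ) hz]

theorem le_mul_exp_sum_of_le_one_add_mul {I a : ℕ → ℝ} {t : ℕ} (hI : 0 ≤ I 0)
    (ha : ∀ s < t, 0 ≤ a s) (h : ∀ s < t, I (s + 1) ≤ (1 + a s) * I s) :
    ∀ s ≤ t, I s ≤ I 0 * exp (∑ u ∈ Finset.range s, a u) := by
  intro s hs
  induction s with
  | zero => simp
  | succ s ih =>
    calc I (s + 1) ≤ (1 + a s) * I s := h s hs
      _ ≤ (1 + a s) * (I 0 * exp (∑ u ∈ Finset.range s, a u)) :=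
        mul_le_mul_of_nonneg_left (ih (by omega)) (by linarith [ha s hs])
      _ ≤ exp (a s) * (I 0 * exp (∑ u ∈ Finset.range s, a u)) := by
        gcongr; linarith [add_one_le_exp (a s)]
      _ = I 0 * exp (∑ u ∈ Finset.range (s + 1), a u) := by
        rw [Finset.sum_range_succ, exp_add]; ring

theorem one_le_log_four_mul_div {t : ℕ} {q : ℝ} (ht : 1 ≤ t) (hq0 : 0 < q) (hq1 : q ≤ 1) :
    1 ≤ log (4 * t / q) := by
  have ht' : (1 : ℝ) ≤ t := by exact_mod_cast ht
  rw [le_log_iff_exp_le (by positivity), le_div_iff₀ hq0]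
  nlinarith [exp_one_lt_d9]

theorem exp_quarter_sub_log_four_mul_div_le {t : ℕ} {q : ℝ} (ht : 1 ≤ t) (hq0 : 0 < q) :
    exp (1 / 4 - log (4 * t / q)) ≤ q := by
  have ht' : (1 : ℝ) ≤ t := by exact_mod_cast ht
  have h4 : exp (1 / 4) < 4 / 3 := by
    have := exp_bound_div_one_sub_of_interval' (x := 1 / 4) (by norm_num) (by norm_num)
    norm_num at this ⊢; exact this
  rw [exp_sub, exp_log (by positivity), div_div_eq_mul_div, div_le_iff₀ (by positivity)]
  nlinarith

theorem two_thirds_pow_mul_exp_le {L S : ℝ} (hL : 1 ≤ L) (hS : S ≤ 1 / 100 * L⁻¹) :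
    (2 / 3) ^ ⌊4 * L⌋₊ * exp ((⌊4 * L⌋₊ + ⌊4 * L⌋₊ ^ 2) * S) ≤ exp (1 / 4 - L) := by
  set p := ⌊4 * L⌋₊
  have hp : (p : ℝ) ≤ 4 * L := Nat.floor_le (by linarith)
  have hp' : 4 * L < p + 1 := Nat.lt_floor_add_one _
  have h23 : (2 / 3 : ℝ) ≤ exp (-(1 / 3)) := by
    have := exp_bound_div_one_sub_of_interval' (x := 1 / 3) (by norm_num) (by norm_num)
    rw [exp_neg, le_inv_comm₀ (by norm_num) (exp_pos _)]
    norm_num at this ⊢; linarith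
  have hpS : ((p : ℝ) + p ^ 2) * S ≤ p / 20 := by
    have hLS : L * S ≤ 1 / 100 := by
      calc L * S ≤ L * (1 / 100 * L⁻¹) := by gcongr
        _ = 1 / 100 := by field_simp
    nlinarith [p.cast_nonneg (α := ℝ)]
  calc (2 / 3) ^ p * exp ((p + p ^ 2) * S)
      ≤ exp (-(1 / 3)) ^ p * exp (p / 20) := by gcongr
    _ = exp (-(17 / 60) * p) := by
      rw [← exp_nat_mul, ← exp_add]; ring_nf
    _ ≤ exp (1 / 4 - L) := exp_le_exp.2 (by linarith [p.cast_nonneg (α := ℝ)])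

theorem add_one_pow_mul_exp_div_le {z₀ L S : ℝ} (hz₀ : 0 ≤ z₀) (hL : 1 ≤ L)
    (hS : S ≤ 1 / 100 * L⁻¹) :
    (z₀ + 1) ^ ⌊4 * L⌋₊ * exp ((⌊4 * L⌋₊ + ⌊4 * L⌋₊ ^ 2) * S) / (2 * max 1 z₀ + 1) ^ ⌊4 * L⌋₊
      ≤ exp (1 / 4 - L) := by
  set p := ⌊4 * L⌋₊
  have hratio : z₀ + 1 ≤ 2 / 3 * (2 * max 1 z₀ + 1) := by
    linarith [le_max_left 1 z₀, le_max_right 1 z₀]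
  rw [div_le_iff₀ (by positivity)]
  calc (z₀ + 1) ^ p * exp ((p + p ^ 2) * S)
      ≤ (2 / 3 * (2 * max 1 z₀ + 1)) ^ p * exp ((p + p ^ 2) * S) := by gcongr
    _ = (2 / 3) ^ p * exp ((p + p ^ 2) * S) * (2 * max 1 z₀ + 1) ^ p := by rw [mul_pow]; ring
    _ ≤ exp (1 / 4 - L) * (2 * max 1 z₀ + 1) ^ p := by
        gcongr; exact two_thirds_pow_mul_exp_le hL hS

section Measure

variable {Ω : Type*} {F m0 : MeasurableSpace Ω} {μ : Measure Ω}

theorem measure_ge_le_ofReal_integral_div [IsFiniteMeasure μ] {f : Ω → ℝ} (hf0 : 0 ≤ᵐ[μ] f)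
    (hf : Integrable f μ) {ε : ℝ} (hε : 0 < ε) :
    μ {ω | ε ≤ f ω} ≤ ENNReal.ofReal ((∫ ω, f ω ∂μ) / ε) := by
  rw [← ofReal_measureReal]
  gcongr
  rw [le_div_iff₀' hε]
  exact mul_meas_ge_le_integral_of_nonneg hf0 hf ε

theorem integral_mul_le_of_condExp_le (hF : F ≤ m0) [SigmaFinite (μ.trim hF)] {f g b : Ω → ℝ}
    (hf : StronglyMeasurable[F] f) (hf0 : 0 ≤ᵐ[μ] f) (hg : Integrable g μ)
    (hfg : Integrable (f * g) μ) (hfb : Integrable (f * b) μ) (hgb : μ[g|F] ≤ᵐ[μ] b) :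
    ∫ ω, f ω * g ω ∂μ ≤ ∫ ω, f ω * b ω ∂μ := by
  have hpull := condExp_mul_of_stronglyMeasurable_left hf hfg hg
  calc ∫ ω, f ω * g ω ∂μ = ∫ ω, (μ[f * g|F]) ω ∂μ := (integral_condExp hF).symm
    _ = ∫ ω, f ω * (μ[g|F]) ω ∂μ := integral_congr_ae hpull
    _ ≤ ∫ ω, f ω * b ω ∂μ := by
      refine integral_mono_ae (integrable_condExp.congr hpull) hfb ?_
      filter_upwards [hgb, hf0] with ω hgb hf0 using mul_le_mul_of_nonneg_left hgb hf0

theorem condExp_sub_le_of_condExp_le (hF : F ≤ m0) [SigmaFinite (μ.trim hF)] {x y : Ω → ℝ}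
    {β τ : ℝ} (hx : Measurable[F] x) (hxi : Integrable x μ) (hyi : Integrable y μ)
    (hβ : 0 ≤ β) (hx0 : ∀ ω, 0 ≤ x ω)
    (h : ∀ᵐ ω ∂μ, (μ[y|F]) ω ≤ (1 - β + τ ^ 2) * x ω + τ ^ 2) :
    μ[y - x|F] ≤ᵐ[μ] fun ω => τ ^ 2 * (x ω + 1) := by
  have hsub := condExp_sub hyi hxi F
  rw [condExp_of_stronglyMeasurable hF hx.stronglyMeasurable hxi] at hsub
  filter_upwards [hsub, h] with ω hsub h
  rw [hsub, Pi.sub_apply]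
  nlinarith [mul_nonneg hβ (hx0 ω)]

theorem integrable_add_one_pow [IsFiniteMeasure μ] {x : Ω → ℝ} {C : ℝ} (hx : Measurable x)
    (hx0 : ∀ ω, 0 ≤ x ω) (hxC : ∀ ω, x ω ≤ C) (n : ℕ) :
    Integrable (fun ω => (x ω + 1) ^ n) μ :=
  .of_bound (by fun_prop : Measurable _).aestronglyMeasurable ((C + 1) ^ n) (.of_forall fun ω => by
    rw [norm_pow, Real.norm_of_nonneg (by linarith [hx0 ω])]
    exact pow_le_pow_left₀ (by linarith [hx0 ω]) (by linarith [hxC ω]) n)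

theorem integrable_add_one_pow_div_pow_mul [IsFiniteMeasure μ] {x g : Ω → ℝ} {C : ℝ}
    (hx : Measurable x) (hx0 : ∀ ω, 0 ≤ x ω) (hxC : ∀ ω, x ω ≤ C) (n k : ℕ)
    (hg : Integrable g μ) :
    Integrable (fun ω => (x ω + 1) ^ n / (x ω + 1) ^ k * g ω) μ :=
  hg.bdd_mul (c := (C + 1) ^ n) (by fun_prop : Measurable _).aestronglyMeasurable
    (.of_forall fun ω => by
      have hw : 1 ≤ x ω + 1 := by linarith [hx0 ω]
      rw [Real.norm_of_nonneg (by positivity)]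
      exact (div_le_self (by positivity) (one_le_pow₀ hw)).trans
        (pow_le_pow_left₀ (by positivity) (by linarith [hxC ω]) n))

theorem integral_add_one_pow_div_pow_mul_le [IsFiniteMeasure μ] (hF : F ≤ m0) {x g : Ω → ℝ}
    {C a : ℝ} {n k : ℕ} (hx : Measurable[F] x) (hx0 : ∀ ω, 0 ≤ x ω) (hxC : ∀ ω, x ω ≤ C)
    (hg : Integrable g μ) (hgb : μ[g|F] ≤ᵐ[μ] fun ω => a * (x ω + 1) ^ k) :
    ∫ ω, (x ω + 1) ^ n / (x ω + 1) ^ k * g ω ∂μ ≤ a * ∫ ω, (x ω + 1) ^ n ∂μ := by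
  have hxm : Measurable[m0] x := hx.mono hF le_rfl
  have hcancel : ∀ ω, (x ω + 1) ^ n / (x ω + 1) ^ k * (a * (x ω + 1) ^ k) = a * (x ω + 1) ^ n :=
    fun ω => by have : (x ω + 1) ^ k ≠ 0 := pow_ne_zero _ (by linarith [hx0 ω]); field_simp
  calc _ ≤ ∫ ω, (x ω + 1) ^ n / (x ω + 1) ^ k * (a * (x ω + 1) ^ k) ∂μ :=
        integral_mul_le_of_condExp_le hF
          (by fun_prop : Measurable[F] fun ω => (x ω + 1) ^ n / (x ω + 1) ^ k).stronglyMeasurable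
          (.of_forall fun ω => by have := hx0 ω; positivity) hg
          (integrable_add_one_pow_div_pow_mul hxm hx0 hxC n k hg)
          (by
            simp_rw [Pi.mul_def, hcancel]
            exact (integrable_add_one_pow hxm hx0 hxC n).const_mul _)
          hgb
    _ = a * ∫ ω, (x ω + 1) ^ n ∂μ := by simp_rw [hcancel]; exact integral_const_mul _ _

theorem integral_add_one_pow_le_of_increment_le [IsFiniteMeasure μ] (hF : F ≤ m0) {x y : Ω → ℝ}
    {C c τ : ℝ} {n : ℕ} (hx : Measurable[F] x) (hy : Measurable y) (hx0 : ∀ ω, 0 ≤ x ω)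
    (hy0 : ∀ ω, 0 ≤ y ω) (hxC : ∀ ω, x ω ≤ C)
    (h1 : μ[y - x|F] ≤ᵐ[μ] fun ω => τ ^ 2 * (x ω + 1))
    (h2 : μ[fun ω => (y ω - x ω) ^ 2|F] ≤ᵐ[μ] fun ω => τ ^ 2 * (x ω + 1) ^ 2)
    (h3 : ∀ ω, |y ω - x ω| ≤ c * (x ω + 1)) (hnc : n * c ≤ 1) :
    ∫ ω, (y ω + 1) ^ n ∂μ ≤ (1 + (n + n ^ 2) * τ ^ 2) * ∫ ω, (x ω + 1) ^ n ∂μ := by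
  have hxm : Measurable[m0] x := hx.mono hF le_rfl
  have hd : ∀ ω, |y ω - x ω| ≤ |c| * (|C| + 1) := fun ω =>
    (h3 ω).trans (mul_le_mul (le_abs_self c) (by linarith [hxC ω, le_abs_self C])
      (by linarith [hx0 ω]) (abs_nonneg c))
  have I_d : Integrable (y - x) μ :=
    .of_bound (by fun_prop : Measurable _).aestronglyMeasurable _ (.of_forall hd)
  have I_d2 : Integrable (fun ω => (y ω - x ω) ^ 2) μ :=
    .of_bound (by fun_prop : Measurable _).aestronglyMeasurable _ (.of_forall fun ω => by
      rw [norm_pow]; exact pow_le_pow_left₀ (norm_nonneg _) (hd ω) 2)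
  have I_w := integrable_add_one_pow (μ := μ) hxm hx0 hxC n
  have I_1 := (integrable_add_one_pow_div_pow_mul hxm hx0 hxC n 1 I_d).const_mul (n : ℝ)
  have I_2 := (integrable_add_one_pow_div_pow_mul hxm hx0 hxC n 2 I_d2).const_mul ((n : ℝ) ^ 2)
  calc ∫ ω, (y ω + 1) ^ n ∂μ
      ≤ ∫ ω, ((x ω + 1) ^ n + n * ((x ω + 1) ^ n / (x ω + 1) ^ 1 * (y - x) ω)
          + n ^ 2 * ((x ω + 1) ^ n / (x ω + 1) ^ 2 * (y ω - x ω) ^ 2)) ∂μ :=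
        integral_mono_of_nonneg (.of_forall fun ω => by have := hy0 ω; positivity)
          ((I_w.add I_1).add I_2)
          (.of_forall fun ω => add_one_pow_le_of_abs_sub_le (hx0 ω) (h3 ω) hnc)
    _ = ∫ ω, (x ω + 1) ^ n ∂μ + n * ∫ ω, (x ω + 1) ^ n / (x ω + 1) ^ 1 * (y - x) ω ∂μ
          + n ^ 2 * ∫ ω, (x ω + 1) ^ n / (x ω + 1) ^ 2 * (y ω - x ω) ^ 2 ∂μ := by
        rw [integral_add, integral_add I_w I_1, integral_const_mul, integral_const_mul]
        · exact I_w.add I_1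
        · exact I_2
    _ ≤ ∫ ω, (x ω + 1) ^ n ∂μ + n * (τ ^ 2 * ∫ ω, (x ω + 1) ^ n ∂μ)
          + n ^ 2 * (τ ^ 2 * ∫ ω, (x ω + 1) ^ n ∂μ) := by
        gcongr
        · exact integral_add_one_pow_div_pow_mul_le hF hx hx0 hxC I_d
            (by simpa only [pow_one] using h1)
        · exact integral_add_one_pow_div_pow_mul_le hF hx hx0 hxC I_d2 h2
    _ = (1 + (n + n ^ 2) * τ ^ 2) * ∫ ω, (x ω + 1) ^ n ∂μ := by ring

theorem exists_forall_le_of_abs_sub_le {z : ℕ → Ω → ℝ} {c : ℕ → ℝ} {t : ℕ}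
    (hc : ∀ s < t, 0 ≤ c s) (h0 : ∃ C, ∀ ω, z 0 ω ≤ C)
    (h : ∀ s < t, ∀ ω, |z (s + 1) ω - z s ω| ≤ c s * (z s ω + 1)) :
    ∀ s ≤ t, ∃ C, ∀ ω, z s ω ≤ C := by
  intro s hs
  induction s with
  | zero => exact h0
  | succ s ih =>
    obtain ⟨C, hC⟩ := ih (by omega)
    refine ⟨C + c s * (C + 1), fun ω => ?_⟩
    have := (abs_le.mp (h s hs ω)).2
    have := mul_le_mul_of_nonneg_left (add_le_add_right (hC ω) 1) (hc s hs)
    linarith [hC ω]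

theorem measure_ge_le_of_increment_le [IsProbabilityMeasure μ] {ℱ : Filtration ℕ m0}
    {z : ℕ → Ω → ℝ} {c τ : ℕ → ℝ} {t p : ℕ} {z₀ r : ℝ} (hadapted : Adapted ℱ z)
    (hz : ∀ s ω, 0 ≤ z s ω) (hz₀ : ∀ ω, z 0 ω = z₀) (hr : 0 ≤ r)
    (hc : ∀ s < t, 0 ≤ c s) (hpc : ∀ s < t, p * c s ≤ 1)
    (h1 : ∀ s < t, μ[z (s + 1) - z s|ℱ s] ≤ᵐ[μ] fun ω => τ s ^ 2 * (z s ω + 1))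
    (h2 : ∀ s < t, μ[fun ω => (z (s + 1) ω - z s ω) ^ 2|ℱ s]
      ≤ᵐ[μ] fun ω => τ s ^ 2 * (z s ω + 1) ^ 2)
    (h3 : ∀ s < t, ∀ ω, |z (s + 1) ω - z s ω| ≤ c s * (z s ω + 1)) :
    μ {ω | r ≤ z t ω} ≤ ENNReal.ofReal
      ((z₀ + 1) ^ p * exp ((p + p ^ 2) * ∑ s ∈ Finset.range t, τ s ^ 2) / (r + 1) ^ p) := by
  have hbdd := exists_forall_le_of_abs_sub_le hc ⟨z₀, fun ω => (hz₀ ω).le⟩ h3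
  have hmeas : ∀ s, Measurable (z s) := fun s => (hadapted s).mono (ℱ.le s) le_rfl
  have hmoment := le_mul_exp_sum_of_le_one_add_mul (I := fun s => ∫ ω, (z s ω + 1) ^ p ∂μ)
    (a := fun s => (p + p ^ 2) * τ s ^ 2) (integral_nonneg fun ω => by have := hz 0 ω; positivity)
    (fun s _ => by positivity) (fun s hs => by
      obtain ⟨C, hC⟩ := hbdd s hs.le
      exact integral_add_one_pow_le_of_increment_le (ℱ.le s) (hadapted s) (hmeas (s + 1)) (hz s)
        (hz (s + 1)) hC (h1 s hs) (h2 s hs) (h3 s hs) (hpc s hs)) t le_rfl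
  simp only [hz₀, integral_const, probReal_univ, one_smul, ← Finset.mul_sum] at hmoment
  obtain ⟨C, hC⟩ := hbdd t le_rfl
  calc μ {ω | r ≤ z t ω} ≤ μ {ω | (r + 1) ^ p ≤ (z t ω + 1) ^ p} :=
        measure_mono fun ω (hω : r ≤ z t ω) =>
          show (r + 1) ^ p ≤ (z t ω + 1) ^ p by gcongr
    _ ≤ ENNReal.ofReal ((∫ ω, (z t ω + 1) ^ p ∂μ) / (r + 1) ^ p) :=
        measure_ge_le_ofReal_integral_div (.of_forall fun ω => by have := hz t ω; positivity)
          (integrable_add_one_pow (hmeas t) (hz t) hC p) (by positivity)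
    _ ≤ _ := by gcongr

end Measure

/-- In the setting of the multi-dimensional martingale lemma with `D = 1`,
`δ = 0`: if moreover `q ∈ (0,1)`, `min_s 1/(6κτ_{s-1}) ≥ 4 ln(4t/q)`,
`∑_{s<t} τ_s² ≤ (1/100)(ln(4t/q))⁻¹` and `β_s ≥ 0`, then
`Pr[z_t ≥ 2·max{1, z₀}] ≤ q`. -/
theorem martingale_concentration_doubling
    {Ω : Type*} {m0 : MeasurableSpace Ω} (μ : Measure Ω) [IsProbabilityMeasure μ]
    (ℱ : Filtration ℕ m0)
    (z : ℕ → Ω → ℝ) (β τ : ℕ → ℝ) (κ : ℝ) (t : ℕ)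
    (hadapted : Adapted ℱ z)
    (hz_nonneg : ∀ s ω, 0 ≤ z s ω)
    (hβ : ∀ s, 0 ≤ β s) (hτ : ∀ s, 0 ≤ τ s) (hκ : 0 ≤ κ)
    (hκτ : ∀ s, κ * τ s ≤ 1 / 6)
    (hint : ∀ s, Integrable (z s) μ)
    (hcond1 : ∀ s < t, ∀ᵐ ω ∂μ,
      (μ[z (s + 1)|ℱ s]) ω ≤ (1 - β s + (τ s) ^ 2) * z s ω + (τ s) ^ 2)
    (hcond2 : ∀ s < t, ∀ᵐ ω ∂μ,
      (μ[fun ω' => (z (s + 1) ω' - z s ω') ^ 2|ℱ s]) ω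
        ≤ (τ s) ^ 2 * ((z s ω) ^ 2 + z s ω) + κ ^ 2 * (τ s) ^ 4)
    (hcond3 : ∀ s < t, ∀ ω, |z (s + 1) ω - z s ω|
        ≤ κ * τ s * (z s ω + Real.sqrt (z s ω)) + κ ^ 2 * (τ s) ^ 2)
    (z0 : ℝ) (hz0 : ∀ ω, z 0 ω = z0)
    (q : ℝ) (hq0 : 0 < q) (hq1 : q < 1)
    (hp : ∀ s, 1 ≤ s → s ≤ t →
      6 * κ * τ (s - 1) * (4 * Real.log (4 * t / q)) ≤ 1)
    (hτsum : ∑ s ∈ Finset.range t, (τ s) ^ 2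
        ≤ 1 / 100 * (Real.log (4 * t / q))⁻¹) :
    μ {ω | 2 * max 1 z0 ≤ z t ω} ≤ ENNReal.ofReal q := by
  rcases Nat.eq_zero_or_pos t with rfl | ht
  · have hempty : {ω | 2 * max 1 z0 ≤ z 0 ω} = ∅ := Set.eq_empty_of_forall_notMem fun ω hω => by
      simp only [Set.mem_ofPred_eq, hz0] at hω
      linarith [le_max_left 1 z0, le_max_right 1 z0]
    simp [hempty]
  obtain ⟨ω₀⟩ := nonempty_of_isProbabilityMeasure μ
  have hL : 1 ≤ log (4 * t / q) := one_le_log_four_mul_div ht hq0 hq1.le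
  have hκτ0 : ∀ s, 0 ≤ κ * τ s := fun s => mul_nonneg hκ (hτ s)
  have hpc : ∀ s < t, (⌊4 * log (4 * t / q)⌋₊ : ℝ) * (3 / 2 * (κ * τ s)) ≤ 1 := fun s hs => by
    have h := hp (s + 1) (by omega) (by omega)
    simp only [Nat.add_sub_cancel] at h
    nlinarith [Nat.floor_le (by positivity : 0 ≤ 4 * log (4 * t / q)), hκτ0 s]
  refine (measure_ge_le_of_increment_le hadapted hz_nonneg hz0 (by positivity)
    (fun s _ => by have := hκτ0 s; positivity) hpc
    (fun s hs => condExp_sub_le_of_condExp_le (ℱ.le s) (hadapted s) (hint s) (hint (s + 1))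
      (hβ s) (hz_nonneg s) (hcond1 s hs))
    (fun s hs => (hcond2 s hs).mono fun ω h => h.trans (sq_mul_add_add_sq_mul_pow_four_le
      (hz_nonneg s ω) (by nlinarith [hκτ s, hκτ0 s])))
    (fun s hs ω => (hcond3 s hs ω).trans (by
      simpa only [mul_pow] using mul_add_sqrt_add_sq_le (hz_nonneg s ω) (hκτ0 s)
        (by linarith [hκτ s])))).trans (ENNReal.ofReal_le_ofReal ?_)
  exact (add_one_pow_mul_exp_div_le (hz0 ω₀ ▸ hz_nonneg 0 ω₀) hL hτsum).trans
    (exp_quarter_sub_log_four_mul_div_le ht hq0)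
end

section
/- Let Q, Q̃ ∈ ℝ^{d×k'} with Q̃ = VS where V ∈ ℝ^{d×r} has orthonormal columns, S ∈ ℝ^{r×(r-k')} has orthonormal columns, SᵀVᵀQ = 0, and Z ∈ ℝ^{d×(d-r)} is the orthonormal complement of V. Then for any matrix X with ZᵀX well-defined such that Xᵀ = Mᵀ Z Zᵀ for some M (i.e., the rows of Xᵀ lie in the column span of Z), we have ‖Xᵀ[Q,Q̃](Vᵀ[Q,Q̃])^{-1}‖_F² = ‖XᵀQ(QᵀVVᵀQ)^{-1/2}‖_F², assuming Vᵀ[Q,Q̃] is invertible. -/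
/-!
Write `F = [Q, V S]` and `A = Vᵀ F`. Since `B` is a two-sided inverse of `A`, `B Bᵀ = (Aᵀ A)⁻¹`,
and orthonormality of `S` together with `Sᵀ Vᵀ Q = 0` makes `Aᵀ A = diag(QᵀVVᵀQ, 1)`.
The columns of `X = Z Zᵀ M` are orthogonal to those of `V`, so `Xᵀ F = [XᵀQ, 0]` only sees the
first diagonal block, whose inverse is `C Cᵀ`.
-/

open Matrix

namespace Matrix

variable {l m n o R : Type*}

theorem trace_transpose_mul_self_mul [CommSemiring R] [Fintype l] [Fintype m] [Fintype n]
    (W : Matrix l m R) (B : Matrix m n R) :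
    trace ((W * B)ᵀ * (W * B)) = trace (W * (B * Bᵀ) * Wᵀ) := by
  rw [trace_mul_comm, transpose_mul, Matrix.mul_assoc, Matrix.mul_assoc, Matrix.mul_assoc]

theorem mul_transpose_eq_inv_transpose_mul_self [CommRing R] [Fintype m] [Fintype n]
    [DecidableEq m] [DecidableEq n] {A : Matrix m n R} {B : Matrix n m R}
    (hAB : A * B = 1) (hBA : B * A = 1) : B * Bᵀ = (Aᵀ * A)⁻¹ := by
  refine (inv_eq_right_inv ?_).symm
  rw [Matrix.mul_assoc, ← Matrix.mul_assoc A, hAB, Matrix.one_mul, ← transpose_mul, hBA,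
    transpose_one]

theorem transpose_fromCols_mul_fromCols_of_orthonormal [CommSemiring R] [Fintype o]
    [DecidableEq n] {P : Matrix o m R} {S : Matrix o n R}
    (hS : Sᵀ * S = 1) (hSP : Sᵀ * P = 0) :
    (fromCols P S)ᵀ * fromCols P S = fromBlocks (Pᵀ * P) 0 0 1 := by
  have hPS : Pᵀ * S = 0 := by
    rw [← transpose_transpose (Pᵀ * S), transpose_mul, transpose_transpose, hSP, transpose_zero]
  rw [transpose_fromCols, fromRows_mul_fromCols, hPS, hSP, hS]

theorem fromCols_zero_mul_inv_fromBlocks_mul_transpose [CommRing R] [Fintype m] [Fintype n]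
    [DecidableEq m] [DecidableEq n] {G : Matrix m m R} {D : Matrix n n R}
    (hD : IsUnit D) (Y : Matrix l m R) (W : Matrix o m R) :
    fromCols Y (0 : Matrix l n R) * (fromBlocks G 0 0 D)⁻¹ * (fromCols W (0 : Matrix o n R))ᵀ
      = Y * G⁻¹ * Wᵀ := by
  by_cases hG : IsUnit G
  · rw [inv_fromBlocks_zero₁₂_of_isUnit_iff _ _ _ (iff_of_true hG hD), transpose_fromCols,
      fromCols_mul_fromBlocks, fromCols_mul_fromRows]
    simp
  · have hGD : ¬IsUnit (fromBlocks G 0 0 D) := by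
      rw [isUnit_fromBlocks_zero₁₂]
      exact fun h => hG h.1
    -- both inverses are the junk value `0`
    rw [isUnit_iff_isUnit_det] at hG hGD
    simp [nonsing_inv_apply_not_isUnit _ hG, nonsing_inv_apply_not_isUnit _ hGD]

end Matrix

theorem under_sampling_frobenius_identity_general {d r k' s : ℕ}
    (V : Matrix (Fin d) (Fin r) ℝ) (hV : Vᵀ * V = 1)
    (Z : Matrix (Fin d) (Fin (d - r)) ℝ) (hZV : Zᵀ * V = 0)
    (Q : Matrix (Fin d) (Fin k') ℝ)
    (S : Matrix (Fin r) (Fin (r - k')) ℝ) (hS : Sᵀ * S = 1)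
    (hSQ : Sᵀ * (Vᵀ * Q) = 0)
    (M : Matrix (Fin d) (Fin s) ℝ)
    (B : Matrix (Fin k' ⊕ Fin (r - k')) (Fin r) ℝ)
    (hB1 : Vᵀ * Matrix.fromCols Q (V * S) * B = 1)
    (hB2 : B * (Vᵀ * Matrix.fromCols Q (V * S)) = 1)
    (C : Matrix (Fin k') (Fin k') ℝ) (hCpsd : C.PosSemidef)
    (hC : C * C = (Qᵀ * (V * Vᵀ) * Q)⁻¹) :
    Matrix.trace (((Z * Zᵀ * M)ᵀ * Matrix.fromCols Q (V * S) * B)ᵀ *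
        ((Z * Zᵀ * M)ᵀ * Matrix.fromCols Q (V * S) * B))
      = Matrix.trace (((Z * Zᵀ * M)ᵀ * Q * C)ᵀ * ((Z * Zᵀ * M)ᵀ * Q * C)) := by
  set X := Z * Zᵀ * M
  have hXV : Xᵀ * V = 0 := by
    rw [transpose_mul, transpose_mul, Matrix.mul_assoc, Matrix.mul_assoc, hZV, Matrix.mul_zero,
      Matrix.mul_zero]
  have hXF : Xᵀ * fromCols Q (V * S) = fromCols (Xᵀ * Q) 0 := by
    rw [mul_fromCols, ← Matrix.mul_assoc, hXV, Matrix.zero_mul]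
  have hVF : Vᵀ * fromCols Q (V * S) = fromCols (Vᵀ * Q) S := by
    rw [mul_fromCols, ← Matrix.mul_assoc, hV, Matrix.one_mul]
  have hGram : (Vᵀ * Q)ᵀ * (Vᵀ * Q) = Qᵀ * (V * Vᵀ) * Q := by
    rw [transpose_mul, transpose_transpose, Matrix.mul_assoc, Matrix.mul_assoc, Matrix.mul_assoc]
  have hCt : Cᵀ = C := hCpsd.isHermitian
  set Y := Xᵀ * Q
  let Y₀ : Matrix (Fin s) (Fin k' ⊕ Fin (r - k')) ℝ := fromCols Y 0
  calc trace ((Xᵀ * fromCols Q (V * S) * B)ᵀ * (Xᵀ * fromCols Q (V * S) * B))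
      = trace (Y₀ * (B * Bᵀ) * Y₀ᵀ) := by
        rw [trace_transpose_mul_self_mul, hXF]
    _ = trace (Y * (Qᵀ * (V * Vᵀ) * Q)⁻¹ * Yᵀ) := by
        rw [mul_transpose_eq_inv_transpose_mul_self hB1 hB2, hVF,
          transpose_fromCols_mul_fromCols_of_orthonormal hS hSQ,
          fromCols_zero_mul_inv_fromBlocks_mul_transpose isUnit_one, hGram]
    _ = trace ((Y * C)ᵀ * (Y * C)) := by
        rw [trace_transpose_mul_self_mul, hCt, hC]

/-- Under-sampling identity: if `Q̃ = V S` lies in the column span of `V`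
(with `S` column-orthonormal and orthogonal to `VᵀQ`), `Z` is the orthonormal
complement of `V`, `X = Z Zᵀ M` has its columns in the span of `Z`, `B` is the
inverse of `Vᵀ[Q, Q̃]`, and `C` is the PSD square root of `(QᵀVVᵀQ)⁻¹`, then
`‖Xᵀ[Q,Q̃](Vᵀ[Q,Q̃])⁻¹‖_F² = ‖XᵀQ(QᵀVVᵀQ)^{-1/2}‖_F²`. -/
theorem under_sampling_frobenius_identity {d r k' s : ℕ} (hk' : k' ≤ r)
    (V : Matrix (Fin d) (Fin r) ℝ) (hV : Vᵀ * V = 1)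
    (Z : Matrix (Fin d) (Fin (d - r)) ℝ) (hZ : Zᵀ * Z = 1) (hZV : Zᵀ * V = 0)
    (hcomp : V * Vᵀ + Z * Zᵀ = 1)
    (Q : Matrix (Fin d) (Fin k') ℝ)
    (S : Matrix (Fin r) (Fin (r - k')) ℝ) (hS : Sᵀ * S = 1)
    (hSQ : Sᵀ * (Vᵀ * Q) = 0)
    (M : Matrix (Fin d) (Fin s) ℝ)
    (B : Matrix (Fin k' ⊕ Fin (r - k')) (Fin r) ℝ)
    (hB1 : Vᵀ * Matrix.fromCols Q (V * S) * B = 1)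
    (hB2 : B * (Vᵀ * Matrix.fromCols Q (V * S)) = 1)
    (C : Matrix (Fin k') (Fin k') ℝ) (hCpsd : C.PosSemidef)
    (hC : C * C = (Qᵀ * (V * Vᵀ) * Q)⁻¹) :
    Matrix.trace (((Z * Zᵀ * M)ᵀ * Matrix.fromCols Q (V * S) * B)ᵀ *
        ((Z * Zᵀ * M)ᵀ * Matrix.fromCols Q (V * S) * B))
      = Matrix.trace (((Z * Zᵀ * M)ᵀ * Q * C)ᵀ * ((Z * Zᵀ * M)ᵀ * Q * C)) :=
  under_sampling_frobenius_identity_general V hV Z hZV Q S hS hSQ M B hB1 hB2 C hCpsd hC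
end
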